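/- Let n, d, q ≥ 1, let D, F, G : Fin n → ℝ with S_F := ∑_i F_i ≠ 0, let y : Fin n → ℝ^q and u : Fin n → ℝ^{1+d}. Set s := ∑_i G_i u_i ∈ ℝ^{1+d}, define the (1+d)×(1+d) matrix M := ∑_i D_i u_i u_iᵀ − (1/S_F) s sᵀ and the q×(1+d) matrix R := ∑_i D_i y_i u_iᵀ − (1/S_F) (∑_k G_k y_k) sᵀ. Suppose β is a (1+d)×q matrix satisfying Mᵀ β = Rᵀ, and define α := (1/S_F) ∑_i G_i (y_i − βᵀ u_i) ∈ ℝ^q. Then the stationarity equation ∑_i D_i (y_i − βᵀ u_i) u_iᵀ = ∑_i G_i · α u_iᵀ holds. In particular, if M is invertible, β := (Mᵀ)^{-1} Rᵀ together with the corresponding α satisfies this equation. (This is the derivation, in the appendix, of the closed-form update for the regression coefficient matrix β_g in the first CM-step of the ECM algorithm, obtained by substituting the closed-form of α_{Y|g} into the β-stationarity equation.) -/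

import Mathlib

/-!
Write `T = ∑ Dᵢ uᵢuᵢᵀ`, `Y = ∑ Dᵢ yᵢuᵢᵀ`, `c = (∑ Fᵢ)⁻¹`, `ȳ = ∑ Gᵢ yᵢ`, so that `M = T - c s sᵀ`
and `R = Y - c ȳ sᵀ`. The residual sum is `Y - βᵀ T`, and the normal equation `βᵀ M = R` turns it
into `c (ȳ - βᵀ s) sᵀ = α sᵀ = ∑ Gᵢ α uᵢᵀ`.
-/

open scoped Matrix

namespace Matrix

variable {ι m n 𝕜 : Type*} [Fintype ι]

theorem vecMulVec_sum [NonUnitalNonAssocSemiring 𝕜] (w : m → 𝕜) (v : ι → n → 𝕜) :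
    vecMulVec w (∑ i, v i) = ∑ i, vecMulVec w (v i) := by
  ext j k
  simp only [vecMulVec_apply, Finset.sum_apply, Matrix.sum_apply, Finset.mul_sum]

theorem sum_smul_vecMulVec_left [CommSemiring 𝕜] (w : ι → 𝕜) (a : m → 𝕜) (u : ι → n → 𝕜) :
    ∑ i, w i • vecMulVec a (u i) = vecMulVec a (∑ i, w i • u i) := by
  simp only [vecMulVec_sum, vecMulVec_smul]

variable [Fintype n] [CommRing 𝕜]

theorem sum_smul_sub_mulVec (w : ι → 𝕜) (y : ι → m → 𝕜) (B : Matrix m n 𝕜) (u : ι → n → 𝕜) :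
    ∑ i, w i • (y i - B *ᵥ u i) = ∑ i, w i • y i - B *ᵥ ∑ i, w i • u i := by
  simp only [smul_sub, Finset.sum_sub_distrib, mulVec_sum, mulVec_smul]

theorem sum_smul_vecMulVec_sub_mulVec (w : ι → 𝕜) (y : ι → m → 𝕜) (B : Matrix m n 𝕜)
    (u : ι → n → 𝕜) :
    ∑ i, w i • vecMulVec (y i - B *ᵥ u i) (u i)
      = ∑ i, w i • vecMulVec (y i) (u i) - B * ∑ i, w i • vecMulVec (u i) (u i) := by
  simp only [sub_vecMulVec, smul_sub, Finset.sum_sub_distrib, Matrix.mul_sum,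
    Matrix.mul_smul, mul_vecMulVec]

theorem sum_smul_vecMulVec_residual_eq_of_mul_eq (D G : ι → 𝕜) (c : 𝕜) (y : ι → m → 𝕜)
    (u : ι → n → 𝕜) (B : Matrix m n 𝕜)
    (hB : B * (∑ i, D i • vecMulVec (u i) (u i)
          - c • vecMulVec (∑ i, G i • u i) (∑ i, G i • u i))
        = ∑ i, D i • vecMulVec (y i) (u i)
          - c • vecMulVec (∑ k, G k • y k) (∑ i, G i • u i)) :
    ∑ i, D i • vecMulVec (y i - B *ᵥ u i) (u i)
      = ∑ i, G i • vecMulVec (c • ∑ i, G i • (y i - B *ᵥ u i)) (u i) := by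
  set s := ∑ i, G i • u i
  have hY : ∑ i, D i • vecMulVec (y i) (u i)
      = B * ∑ i, D i • vecMulVec (u i) (u i)
        + c • (vecMulVec (∑ k, G k • y k) s - B * vecMulVec s s) := by
    rw [Matrix.mul_sub, Matrix.mul_smul] at hB
    linear_combination (norm := module) (-1 : 𝕜) • hB
  rw [sum_smul_vecMulVec_sub_mulVec, hY, sum_smul_vecMulVec_left, sum_smul_sub_mulVec,
    smul_vecMulVec, sub_vecMulVec, mul_vecMulVec, add_sub_cancel_left]

end Matrix

theorem cm_step_beta_update_general
    (n d q : ℕ)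
    (D F G : Fin n → ℝ)
    (y : Fin n → (Fin q → ℝ)) (u : Fin n → (Fin (1 + d) → ℝ))
    (s : Fin (1 + d) → ℝ) (hs : s = ∑ i, G i • u i)
    (M : Matrix (Fin (1 + d)) (Fin (1 + d)) ℝ)
    (hM : M = ∑ i, D i • Matrix.vecMulVec (u i) (u i)
      - (∑ i, F i)⁻¹ • Matrix.vecMulVec s s)
    (R : Matrix (Fin q) (Fin (1 + d)) ℝ)
    (hR : R = ∑ i, D i • Matrix.vecMulVec (y i) (u i)
      - (∑ i, F i)⁻¹ • Matrix.vecMulVec (∑ k, G k • y k) s) :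
    (∀ (β : Matrix (Fin (1 + d)) (Fin q) ℝ), Mᵀ * β = Rᵀ →
      ∀ (α : Fin q → ℝ),
        α = (∑ i, F i)⁻¹ • ∑ i, G i • (y i - Matrix.mulVec βᵀ (u i)) →
        (∑ i, D i • Matrix.vecMulVec (y i - Matrix.mulVec βᵀ (u i)) (u i))
          = ∑ i, G i • Matrix.vecMulVec α (u i)) ∧
    (IsUnit M.det →
      (∑ i, D i • Matrix.vecMulVec
          (y i - Matrix.mulVec ((Mᵀ)⁻¹ * Rᵀ)ᵀ (u i)) (u i))
        = ∑ i, G i • Matrix.vecMulVec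
            ((∑ i, F i)⁻¹ •
              ∑ i, G i • (y i - Matrix.mulVec ((Mᵀ)⁻¹ * Rᵀ)ᵀ (u i))) (u i)) := by
  have stationary : ∀ (β : Matrix (Fin (1 + d)) (Fin q) ℝ), Mᵀ * β = Rᵀ →
      ∀ (α : Fin q → ℝ),
        α = (∑ i, F i)⁻¹ • ∑ i, G i • (y i - Matrix.mulVec βᵀ (u i)) →
        (∑ i, D i • Matrix.vecMulVec (y i - Matrix.mulVec βᵀ (u i)) (u i))
          = ∑ i, G i • Matrix.vecMulVec α (u i) := by
    rintro β hβ α rfl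
    have hβM : βᵀ * M = R := by
      simpa only [Matrix.transpose_mul, Matrix.transpose_transpose] using congrArg (·ᵀ) hβ
    subst hs hM hR
    exact Matrix.sum_smul_vecMulVec_residual_eq_of_mul_eq D G _ y u βᵀ hβM
  refine ⟨stationary, fun hM_unit => stationary _ ?_ _ rfl⟩
  exact Matrix.mul_nonsing_inv_cancel_left _ _ (by rwa [Matrix.det_transpose])

/-- Closed-form update for the regression coefficient matrix `β` in the first
CM-step of the ECM algorithm: if `Mᵀ β = Rᵀ` and `α` is the corresponding
skewness update, then the stationarity equation
`∑ i, D i • (y i − βᵀ u i) u iᵀ = ∑ i, G i • α u iᵀ` holds; in particular, if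
`M` is invertible, `β = (Mᵀ)⁻¹ Rᵀ` together with its `α` satisfies it. -/
theorem cm_step_beta_update
    (n d q : ℕ) (hn : 1 ≤ n) (hd : 1 ≤ d) (hq : 1 ≤ q)
    (D F G : Fin n → ℝ) (hF : (∑ i, F i) ≠ 0)
    (y : Fin n → (Fin q → ℝ)) (u : Fin n → (Fin (1 + d) → ℝ))
    (s : Fin (1 + d) → ℝ) (hs : s = ∑ i, G i • u i)
    (M : Matrix (Fin (1 + d)) (Fin (1 + d)) ℝ)
    (hM : M = ∑ i, D i • Matrix.vecMulVec (u i) (u i)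
      - (∑ i, F i)⁻¹ • Matrix.vecMulVec s s)
    (R : Matrix (Fin q) (Fin (1 + d)) ℝ)
    (hR : R = ∑ i, D i • Matrix.vecMulVec (y i) (u i)
      - (∑ i, F i)⁻¹ • Matrix.vecMulVec (∑ k, G k • y k) s) :
    (∀ (β : Matrix (Fin (1 + d)) (Fin q) ℝ), Mᵀ * β = Rᵀ →
      ∀ (α : Fin q → ℝ),
        α = (∑ i, F i)⁻¹ • ∑ i, G i • (y i - Matrix.mulVec βᵀ (u i)) →
        (∑ i, D i • Matrix.vecMulVec (y i - Matrix.mulVec βᵀ (u i)) (u i))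
          = ∑ i, G i • Matrix.vecMulVec α (u i)) ∧
    (IsUnit M.det →
      (∑ i, D i • Matrix.vecMulVec
          (y i - Matrix.mulVec ((Mᵀ)⁻¹ * Rᵀ)ᵀ (u i)) (u i))
        = ∑ i, G i • Matrix.vecMulVec
            ((∑ i, F i)⁻¹ •
              ∑ i, G i • (y i - Matrix.mulVec ((Mᵀ)⁻¹ * Rᵀ)ᵀ (u i))) (u i)) :=
  cm_step_beta_update_general n d q D F G y u s hs M hM R hR
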